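/- For positive reals a and b and suitable f, the Liouville integral identity holds: ∫₀^∞ f(a·x + b/x) · x^(−1/2) dx = a^(−1/2) ∫₀^∞ f(2·√(a·b) + y) · y^(−1/2) dy. -/

import Mathlib

/-!
After `x = t ^ 2` the left side is `2 ∫₀^∞ f (a t² + b / t²) dt`, and
`a t² + b / t² = 2 √(ab) + (√a t - √b / t)²`. The Cauchy–Schlömilch transformation
`∫₀^∞ g ((α t - β / t)²) dt = α⁻¹ ∫₀^∞ g (u²) du` turns this into `2 a^(-1/2) ∫₀^∞ f (2 √(ab) + u²) du`,
which is the right side after `y = u ^ 2`.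

Cauchy–Schlömilch: `u = α t - β / t` maps `(0, ∞)` bijectively onto `ℝ` with
`du = (α + β / t²) dt`, and the inversion `t ↦ β / (α t)`, which fixes `(α t - β / t)²`, shows that
the `β / t²` part of `du` contributes exactly as much as the `α` part.
-/

open MeasureTheory Real Set

theorem rpow_sq_neg_half {t : ℝ} (ht : 0 < t) : (t ^ 2) ^ (-(1:ℝ)/2) = t⁻¹ := by
  rw [neg_div, rpow_neg (by positivity), ← sqrt_eq_rpow, sqrt_sq ht.le]

theorem two_mul_rpow_mul_rpow_sq_neg_half {t : ℝ} (ht : 0 < t) (y : ℝ) :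
    2 * t ^ ((2:ℝ) - 1) * (y * (t ^ 2) ^ (-(1:ℝ)/2)) = 2 * y := by
  rw [rpow_sq_neg_half ht]
  norm_num
  field_simp

theorem integral_Ioi_mul_rpow_neg_half (g : ℝ → ℝ) :
    ∫ y in Ioi 0, g y * y ^ (-(1:ℝ)/2) = 2 * ∫ t in Ioi 0, g (t ^ 2) := by
  rw [← integral_comp_rpow_Ioi_of_pos two_pos, ← integral_const_mul]
  refine setIntegral_congr_fun measurableSet_Ioi fun t (ht : 0 < t) => ?_
  simp only [smul_eq_mul, rpow_two, two_mul_rpow_mul_rpow_sq_neg_half ht]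

theorem integrableOn_Ioi_mul_rpow_neg_half_iff (g : ℝ → ℝ) :
    IntegrableOn (fun y => g y * y ^ (-(1:ℝ)/2)) (Ioi 0) ↔
      IntegrableOn (fun t => g (t ^ 2)) (Ioi 0) := by
  rw [← integrableOn_Ioi_comp_rpow_iff _ two_ne_zero]
  unfold IntegrableOn
  rw [← integrable_const_mul_iff (isUnit_iff_ne_zero.2 two_ne_zero) (fun t => g (t ^ 2))]
  refine integrableOn_congr_fun (fun t (ht : 0 < t) => ?_) measurableSet_Ioi
  simp only [smul_eq_mul, abs_two, rpow_two, two_mul_rpow_mul_rpow_sq_neg_half ht]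

theorem two_mul_sqrt_mul_add_sq_sub_div {a b : ℝ} (ha : 0 ≤ a) (hb : 0 ≤ b) {t : ℝ}
    (ht : t ≠ 0) : 2 * √(a * b) + (√a * t - √b / t) ^ 2 = a * t ^ 2 + b / t ^ 2 := by
  rw [sqrt_mul ha]
  field_simp
  linear_combination t ^ 4 * sq_sqrt ha + sq_sqrt hb

section ConstDiv

variable {E : Type*} [NormedAddCommGroup E] [NormedSpace ℝ E] {c : ℝ}

theorem image_const_div_Ioi (hc : 0 < c) : (fun x => c / x) '' Ioi 0 = Ioi (0 : ℝ) := by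
  refine Subset.antisymm (image_subset_iff.2 fun x (hx : 0 < x) => div_pos hc hx) fun y hy => ?_
  exact ⟨c / y, div_pos hc hy, div_div_cancel₀ hc.ne'⟩

theorem const_div_injective {G₀ : Type*} [GroupWithZero G₀] {c : G₀} (hc : c ≠ 0) :
    Function.Injective fun x : G₀ => c / x :=
  fun x y hxy => by simpa [div_eq_mul_inv, hc] using hxy

theorem hasDerivAt_const_div {x : ℝ} (hx : x ≠ 0) (c : ℝ) :
    HasDerivAt (fun x => c / x) (-(c / x ^ 2)) x := by
  simpa [div_eq_mul_inv, neg_div] using (hasDerivAt_inv hx).const_mul c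

theorem abs_neg_div_sq (hc : 0 ≤ c) (x : ℝ) : |-(c / x ^ 2)| = c / x ^ 2 := by
  rw [abs_neg, abs_of_nonneg (by positivity)]

theorem integral_comp_div_Ioi (g : ℝ → E) (hc : 0 < c) :
    ∫ x in Ioi 0, (c / x ^ 2) • g (c / x) = ∫ y in Ioi 0, g y := by
  have h := integral_image_eq_integral_abs_deriv_smul measurableSet_Ioi
    (fun x (hx : 0 < x) => (hasDerivAt_const_div hx.ne' c).hasDerivWithinAt)
    (const_div_injective hc.ne').injOn g
  rw [image_const_div_Ioi hc] at h
  simp only [h, abs_neg_div_sq hc.le]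

theorem integrableOn_comp_div_Ioi_iff (g : ℝ → E) (hc : 0 < c) :
    IntegrableOn (fun x => (c / x ^ 2) • g (c / x)) (Ioi 0) ↔ IntegrableOn g (Ioi 0) := by
  have h := integrableOn_image_iff_integrableOn_abs_deriv_smul measurableSet_Ioi
    (fun x (hx : 0 < x) => (hasDerivAt_const_div hx.ne' c).hasDerivWithinAt)
    (const_div_injective hc.ne').injOn g
  rw [image_const_div_Ioi hc] at h
  simp only [h, abs_neg_div_sq hc.le]

end ConstDiv

section CauchySchlomilch

variable {α β : ℝ}

theorem strictMonoOn_mul_sub_div (hα : 0 < α) (hβ : 0 ≤ β) :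
    StrictMonoOn (fun t => α * t - β / t) (Ioi 0) := fun x (hx : 0 < x) y _ hxy => by
  have : β / y ≤ β / x := div_le_div_of_nonneg_left hβ hx hxy.le
  simp only
  nlinarith

theorem image_mul_sub_div_Ioi (hα : 0 < α) (hβ : 0 < β) :
    (fun t => α * t - β / t) '' Ioi 0 = univ := by
  refine eq_univ_of_forall fun u => ?_
  -- the positive root of `α t ^ 2 - u t - β`
  set r := √(u ^ 2 + 4 * α * β)
  have hr : r ^ 2 = u ^ 2 + 4 * α * β := sq_sqrt (by positivity)
  have hur : 0 < u + r := by
    nlinarith [abs_lt_of_sq_lt_sq' (show u ^ 2 < r ^ 2 by nlinarith) (sqrt_nonneg _)]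
  refine ⟨(u + r) / (2 * α), div_pos hur (by positivity), ?_⟩
  field_simp
  linear_combination hr

theorem hasDerivAt_mul_sub_div {t : ℝ} (ht : t ≠ 0) (α β : ℝ) :
    HasDerivAt (fun t => α * t - β / t) (α + β / t ^ 2) t := by
  simpa using ((hasDerivAt_id t).const_mul α).fun_sub (hasDerivAt_const_div ht β)

theorem sq_mul_sub_div_comp_div (hα : α ≠ 0) (hβ : β ≠ 0) {s : ℝ} (hs : s ≠ 0) :
    (α * (β / α / s) - β / (β / α / s)) ^ 2 = (α * s - β / s) ^ 2 := by
  field_simp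
  ring

theorem integral_Ioi_comp_sq_mul_sub_div (hα : 0 < α) (hβ : 0 < β) (g : ℝ → ℝ)
    (hg : IntegrableOn (fun t => g ((α * t - β / t) ^ 2)) (Ioi 0)) :
    ∫ t in Ioi 0, g ((α * t - β / t) ^ 2) = α⁻¹ * ∫ u in Ioi 0, g (u ^ 2) := by
  set h := fun t => g ((α * t - β / t) ^ 2)
  have hc : 0 < β / α := div_pos hβ hα
  have h_inv : EqOn (fun s => (β / α / s ^ 2) • h (β / α / s)) (fun s => β / α / s ^ 2 * h s)
      (Ioi 0) := fun s (hs : 0 < s) => by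
    simp only [h, smul_eq_mul, sq_mul_sub_div_comp_div hα.ne' hβ.ne' hs.ne']
  have hint_inv : IntegrableOn (fun s => β / α / s ^ 2 * h s) (Ioi 0) :=
    ((integrableOn_comp_div_Ioi_iff h hc).2 hg).congr_fun h_inv measurableSet_Ioi
  have hint_eq : ∫ s in Ioi 0, β / α / s ^ 2 * h s = ∫ t in Ioi 0, h t := by
    rw [← integral_comp_div_Ioi h hc, setIntegral_congr_fun measurableSet_Ioi h_inv]
  have hsubst : ∫ u, g (u ^ 2) = ∫ s in Ioi 0, (α + β / s ^ 2) * h s := by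
    have := integral_image_eq_integral_abs_deriv_smul measurableSet_Ioi
      (fun s (hs : 0 < s) => (hasDerivAt_mul_sub_div hs.ne' α β).hasDerivWithinAt)
      (strictMonoOn_mul_sub_div hα hβ.le).injOn (fun u => g (u ^ 2))
    rw [image_mul_sub_div_Ioi hα hβ, Measure.restrict_univ] at this
    rw [this]
    refine setIntegral_congr_fun measurableSet_Ioi fun s (hs : 0 < s) => ?_
    rw [smul_eq_mul, abs_of_pos (by positivity)]
  have hsymm : ∫ u, g (u ^ 2) = 2 * ∫ u in Ioi 0, g (u ^ 2) := by
    have := integral_comp_abs (f := fun u => g (u ^ 2))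
    simpa only [sq_abs] using this
  have : 2 * ∫ u in Ioi 0, g (u ^ 2) = 2 * (α * ∫ t in Ioi 0, h t) :=
    calc 2 * ∫ u in Ioi 0, g (u ^ 2)
        _ = ∫ s in Ioi 0, α * h s + α * (β / α / s ^ 2 * h s) := by
          rw [← hsymm, hsubst]
          refine setIntegral_congr_fun measurableSet_Ioi fun s (hs : 0 < s) => ?_
          field_simp
        _ = 2 * (α * ∫ t in Ioi 0, h t) := by
          rw [integral_add (hg.const_mul α) (hint_inv.const_mul α), integral_const_mul,
            integral_const_mul, hint_eq]
          ring
  field_simp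
  linarith

end CauchySchlomilch

theorem liouville_identity (a b : ℝ) (ha : 0 < a) (hb : 0 < b)
    (f : ℝ → ℝ)
    (h1 : IntegrableOn (fun x => f (a * x + b / x) * x ^ (-(1:ℝ)/2)) (Ioi 0)) :
    ∫ x in Ioi (0 : ℝ), f (a * x + b / x) * x ^ (-(1:ℝ)/2)
      = a ^ (-(1:ℝ)/2) * ∫ y in Ioi (0 : ℝ), f (2 * Real.sqrt (a * b) + y) * y ^ (-(1:ℝ)/2) := by
  set c := 2 * √(a * b)
  have h_sq : EqOn (fun t => f (a * t ^ 2 + b / t ^ 2)) (fun t => f (c + (√a * t - √b / t) ^ 2))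
      (Ioi 0) := fun t (ht : 0 < t) => by
    simp only [c, two_mul_sqrt_mul_add_sq_sub_div ha.le hb.le ht.ne']
  have h_int : IntegrableOn (fun t => f (c + (√a * t - √b / t) ^ 2)) (Ioi 0) :=
    ((integrableOn_Ioi_mul_rpow_neg_half_iff _).1 h1).congr_fun h_sq measurableSet_Ioi
  rw [integral_Ioi_mul_rpow_neg_half (fun x => f (a * x + b / x)),
    integral_Ioi_mul_rpow_neg_half (fun y => f (c + y)),
    setIntegral_congr_fun measurableSet_Ioi h_sq,
    integral_Ioi_comp_sq_mul_sub_div (sqrt_pos.2 ha) (sqrt_pos.2 hb) (fun y => f (c + y)) h_int,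
    neg_div, rpow_neg ha.le, ← sqrt_eq_rpow]
  ring
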